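/- For fixed h > 0, define g : (0, ∞) → ℝ by g(λ) = √((1 − e^{−2λh})/(2λ)). Then for every fixed ε > 0: (i) g(λ) − g(λ + ε) ≥ 0 for all λ > 0, and (ii) the function λ ↦ g(λ) − g(λ + ε) is nonincreasing on (0, ∞). -/

import Mathlib

noncomputable def noiseStd (h lam : ℝ) : ℝ :=
  Real.sqrt ((1 - Real.exp (-(2 * lam) * h)) / (2 * lam))

/-- log of the squared noise coefficient. -/
noncomputable def nsL (h lam : ℝ) : ℝ :=
  Real.log (1 - Real.exp (-(2 * lam) * h)) - Real.log (2 * lam)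

/-- derivative of `nsL h`. -/
noncomputable def nsL' (h lam : ℝ) : ℝ :=
  2 * h * Real.exp (-(2 * lam) * h) / (1 - Real.exp (-(2 * lam) * h)) - lam⁻¹

lemma exp_lt_one_of_pos {h lam : ℝ} (hh : 0 < h) (hlam : 0 < lam) :
    Real.exp (-(2 * lam) * h) < 1 := by
  rw [Real.exp_lt_one_iff]; nlinarith

lemma hasDerivAt_inner {h lam : ℝ} :
    HasDerivAt (fun l : ℝ => -(2 * l) * h) (-(2 * h)) lam := by
  have heq : (fun l : ℝ => -(2 * l) * h) = fun l : ℝ => (-(2 * h)) * l := by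
    funext l; ring
  rw [heq]
  simpa using (hasDerivAt_id lam).const_mul (-(2 * h))

lemma hasDerivAt_A {h lam : ℝ} :
    HasDerivAt (fun l : ℝ => 1 - Real.exp (-(2 * l) * h))
      (2 * h * Real.exp (-(2 * lam) * h)) lam := by
  have := (hasDerivAt_inner (h := h) (lam := lam)).exp.const_sub 1
  exact this.congr_deriv (by ring)

lemma nsL_hasDeriv {h lam : ℝ} (hh : 0 < h) (hlam : 0 < lam) :
    HasDerivAt (nsL h) (nsL' h lam) lam := by
  have hA : (0:ℝ) < 1 - Real.exp (-(2 * lam) * h) := by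
    linarith [exp_lt_one_of_pos hh hlam]
  have h3 := (hasDerivAt_A (h := h) (lam := lam)).log (ne_of_gt hA)
  have h5 : HasDerivAt (fun l : ℝ => 2 * l) (2 : ℝ) lam := by
    simpa using (hasDerivAt_id lam).const_mul (2:ℝ)
  have h4 : HasDerivAt (fun l : ℝ => Real.log (2 * l)) lam⁻¹ lam := by
    have := h5.log (by positivity)
    convert this using 1
    field_simp
  exact h3.sub h4

lemma nsL'_hasDeriv {h lam : ℝ} (hh : 0 < h) (hlam : 0 < lam) :
    HasDerivAt (nsL' h)
      (((1 - Real.exp (-(2 * lam) * h))^2 - 4 * h^2 * lam^2 * Real.exp (-(2 * lam) * h)) /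
        ((1 - Real.exp (-(2 * lam) * h))^2 * lam^2)) lam := by
  have hA : (0:ℝ) < 1 - Real.exp (-(2 * lam) * h) := by
    linarith [exp_lt_one_of_pos hh hlam]
  have hN : HasDerivAt (fun l : ℝ => 2 * h * Real.exp (-(2 * l) * h))
      (2 * h * (Real.exp (-(2 * lam) * h) * (-(2 * h)))) lam :=
    (hasDerivAt_inner (h := h) (lam := lam)).exp.const_mul (2 * h)
  have hdiv := hN.div (hasDerivAt_A (h := h) (lam := lam)) (ne_of_gt hA)
  have hinv := hasDerivAt_inv (ne_of_gt hlam)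
  have := hdiv.sub hinv
  set E := Real.exp (-(2 * lam) * h) with hE
  refine HasDerivAt.congr_deriv (f := nsL' h) this ?_
  have hAne : (1 - E) ≠ 0 := ne_of_gt hA
  field_simp
  ring

/-- key inequality: `u² e^{-u} ≤ (1 - e^{-u})²` for `u = 2 lam h > 0`. -/
lemma key_ineq {h lam : ℝ} (hh : 0 < h) (hlam : 0 < lam) :
    4 * h^2 * lam^2 * Real.exp (-(2 * lam) * h) ≤ (1 - Real.exp (-(2 * lam) * h))^2 := by
  set t := lam * h with ht
  have ht0 : 0 < t := mul_pos hlam hh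
  have hsinh : t < Real.sinh t := Real.self_lt_sinh_iff.2 ht0
  rw [Real.sinh_eq] at hsinh
  have hexp1 : Real.exp t * Real.exp (-t) = 1 := by
    rw [← Real.exp_add]; simp
  have hexp2 : Real.exp (-t) * Real.exp (-t) = Real.exp (-(2 * lam) * h) := by
    rw [← Real.exp_add]; congr 1; ring
  have hepos : 0 < Real.exp (-t) := Real.exp_pos _
  -- 2 t e^{-t} ≤ 1 - e^{-2t}
  have hstep : 2 * t * Real.exp (-t) ≤ 1 - Real.exp (-(2 * lam) * h) := by
    nlinarith [mul_lt_mul_of_pos_right hsinh hepos]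
  have hLnn : 0 ≤ 2 * t * Real.exp (-t) := by positivity
  calc 4 * h^2 * lam^2 * Real.exp (-(2 * lam) * h)
      = (2 * t * Real.exp (-t)) * (2 * t * Real.exp (-t)) := by rw [← hexp2, ht]; ring
    _ ≤ (1 - Real.exp (-(2 * lam) * h)) * (1 - Real.exp (-(2 * lam) * h)) :=
        mul_self_le_mul_self hLnn hstep
    _ = (1 - Real.exp (-(2 * lam) * h))^2 := by ring

lemma nsL'_nonpos {h lam : ℝ} (hh : 0 < h) (hlam : 0 < lam) : nsL' h lam ≤ 0 := by
  have hA : (0:ℝ) < 1 - Real.exp (-(2 * lam) * h) := by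
    linarith [exp_lt_one_of_pos hh hlam]
  have hkey : 2 * lam * h + 1 ≤ Real.exp (2 * lam * h) := Real.add_one_le_exp _
  have hexp1 : Real.exp (2 * lam * h) * Real.exp (-(2 * lam) * h) = 1 := by
    have hz : 2 * lam * h + -(2 * lam) * h = 0 := by ring
    rw [← Real.exp_add, hz, Real.exp_zero]
  have hepos : 0 < Real.exp (-(2 * lam) * h) := Real.exp_pos _
  have hmul : (2 * lam * h + 1) * Real.exp (-(2 * lam) * h) ≤ 1 := by
    calc (2 * lam * h + 1) * Real.exp (-(2 * lam) * h)
        ≤ Real.exp (2 * lam * h) * Real.exp (-(2 * lam) * h) :=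
          mul_le_mul_of_nonneg_right hkey hepos.le
      _ = 1 := hexp1
  have h2 : 2 * h * Real.exp (-(2 * lam) * h) ≤ lam⁻¹ * (1 - Real.exp (-(2 * lam) * h)) := by
    rw [inv_mul_eq_div, le_div_iff₀ hlam]
    nlinarith
  exact sub_nonpos.2 ((div_le_iff₀ hA).2 h2)

lemma deriv_nsL_eqOn {h lam : ℝ} (hh : 0 < h) (hlam : 0 < lam) :
    deriv (nsL h) =ᶠ[nhds lam] nsL' h :=
  Filter.eventuallyEq_of_mem (Ioi_mem_nhds hlam)
    (fun x hx => (nsL_hasDeriv hh hx).deriv)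

lemma nsL_convex {h : ℝ} (hh : 0 < h) : ConvexOn ℝ (Set.Ioi 0) (nsL h) := by
  apply convexOn_of_deriv2_nonneg (convex_Ioi 0)
  · exact fun lam hlam => (nsL_hasDeriv hh hlam).continuousAt.continuousWithinAt
  · rw [interior_Ioi]
    exact fun lam hlam => (nsL_hasDeriv hh hlam).differentiableAt.differentiableWithinAt
  · rw [interior_Ioi]
    intro lam hlam
    have := (nsL'_hasDeriv hh hlam).differentiableAt.congr_of_eventuallyEq
      (deriv_nsL_eqOn hh hlam)
    exact this.differentiableWithinAt
  · rw [interior_Ioi]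
    intro lam hlam
    have h2 : deriv^[2] (nsL h) lam = deriv (deriv (nsL h)) lam := rfl
    rw [h2, (deriv_nsL_eqOn hh hlam).deriv_eq, (nsL'_hasDeriv hh hlam).deriv]
    have hA : (0:ℝ) < 1 - Real.exp (-(2 * lam) * h) := by
      linarith [exp_lt_one_of_pos hh hlam]
    exact div_nonneg (by linarith [key_ineq hh hlam]) (by positivity)

lemma nsL_anti {h : ℝ} (hh : 0 < h) : AntitoneOn (nsL h) (Set.Ioi 0) := by
  apply antitoneOn_of_deriv_nonpos (convex_Ioi 0)
  · exact fun lam hlam => (nsL_hasDeriv hh hlam).continuousAt.continuousWithinAt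
  · rw [interior_Ioi]
    exact fun lam hlam => (nsL_hasDeriv hh hlam).differentiableAt.differentiableWithinAt
  · rw [interior_Ioi]
    intro lam hlam
    rw [(nsL_hasDeriv hh hlam).deriv]
    exact nsL'_nonpos hh hlam

lemma convexOn_exp_comp {s : Set ℝ} {F : ℝ → ℝ} (hF : ConvexOn ℝ s F) :
    ConvexOn ℝ s fun x => Real.exp (F x) := by
  refine ⟨hF.1, fun x hx y hy a b ha hb hab => ?_⟩
  have h1 := hF.2 hx hy ha hb hab
  have h2 := convexOn_exp.2 (Set.mem_univ (F x)) (Set.mem_univ (F y)) ha hb hab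
  simp only [smul_eq_mul] at *
  exact le_trans (Real.exp_le_exp.2 h1) h2

lemma noiseStd_eq {h lam : ℝ} (hh : 0 < h) (hlam : 0 < lam) :
    noiseStd h lam = Real.exp ((1/2 : ℝ) * nsL h lam) := by
  have hA : (0:ℝ) < 1 - Real.exp (-(2 * lam) * h) := by
    linarith [exp_lt_one_of_pos hh hlam]
  have h2l : (0:ℝ) < 2 * lam := by linarith
  have hf : (0:ℝ) < (1 - Real.exp (-(2 * lam) * h)) / (2 * lam) := div_pos hA h2l
  rw [noiseStd, Real.sqrt_eq_rpow, Real.rpow_def_of_pos hf]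
  congr 1
  rw [nsL, Real.log_div (ne_of_gt hA) (ne_of_gt h2l)]
  ring

lemma sec_diff {g : ℝ → ℝ} (hg : ConvexOn ℝ (Set.Ioi (0:ℝ)) g) {x y ε : ℝ}
    (hx : 0 < x) (hxy : x < y) (hε : 0 < ε) :
    g y + g (x + ε) ≤ g x + g (y + ε) := by
  have hd0 : 0 < y + ε - x := by linarith
  set s : ℝ := (y - x) / (y + ε - x) with hs
  have hs0 : 0 ≤ s := div_nonneg (by linarith) hd0.le
  have hs1 : s ≤ 1 := (div_le_one hd0).2 (by linarith)
  have hxm : x ∈ Set.Ioi (0:ℝ) := hx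
  have hym : y + ε ∈ Set.Ioi (0:ℝ) := by simp; linarith
  have hsd : s * (y + ε - x) = y - x := div_mul_cancel₀ _ (ne_of_gt hd0)
  have e1 := hg.2 hxm hym (by linarith : (0:ℝ) ≤ 1 - s) hs0 (by ring)
  have e2 := hg.2 hxm hym hs0 (by linarith : (0:ℝ) ≤ 1 - s) (by ring)
  simp only [smul_eq_mul] at e1 e2
  have he1 : (1 - s) * x + s * (y + ε) = y := by nlinarith [hsd]
  have he2 : s * x + (1 - s) * (y + ε) = x + ε := by nlinarith [hsd]
  rw [he1] at e1
  rw [he2] at e2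
  linarith

theorem noise_coefficient_perturbation (h : ℝ) (hh : 0 < h) (ε : ℝ) (hε : 0 < ε) :
    (∀ lam : ℝ, 0 < lam → 0 ≤ noiseStd h lam - noiseStd h (lam + ε)) ∧
      AntitoneOn (fun lam : ℝ => noiseStd h lam - noiseStd h (lam + ε)) (Set.Ioi 0) := by
  have hconvL := (nsL_convex hh).smul (by norm_num : (0:ℝ) ≤ 1/2)
  have hGconv : ConvexOn ℝ (Set.Ioi 0) (fun l => Real.exp ((1/2 : ℝ) * nsL h l)) := by
    have := convexOn_exp_comp hconvL
    simpa [smul_eq_mul] using this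
  have hEq : Set.EqOn (noiseStd h) (fun l => Real.exp ((1/2 : ℝ) * nsL h l)) (Set.Ioi 0) :=
    fun l hl => noiseStd_eq hh hl
  have hconv : ConvexOn ℝ (Set.Ioi 0) (noiseStd h) :=
    hGconv.congr (fun l hl => (hEq hl).symm)
  have hanti : AntitoneOn (noiseStd h) (Set.Ioi 0) := by
    intro a ha b hb hab
    rw [hEq ha, hEq hb]
    exact Real.exp_le_exp.2 (by
      have := nsL_anti hh ha hb hab
      linarith)
  constructor
  · intro lam hlam
    have h1 : lam ∈ Set.Ioi (0:ℝ) := hlam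
    have h2 : lam + ε ∈ Set.Ioi (0:ℝ) := by simp; linarith
    have := hanti h1 h2 (by linarith)
    linarith
  · intro a ha b hb hab
    rcases eq_or_lt_of_le hab with rfl | hlt
    · exact le_refl _
    · have h1 := sec_diff hconv (Set.mem_Ioi.1 ha) hlt hε
      simp only
      linarith
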